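/- arXiv:math/0610878 — 5 statements merged into one kernel-verified Lean document; each statement's English description precedes it below -/
import Mathlib

section
/- Let L and M be saturated subgroups of ℤ^n such that rank L + rank M = n and L + M has finite index in ℤ^n. Then [ℤ^n : L + M] = [Hom(ℤ^n, ℤ) : L^⊥ + M^⊥], i.e., the index of L + M in ℤ^n equals the index of L^⊥ + M^⊥ in the dual lattice Hom(ℤ^n, ℤ). -/
/-!
Saturation of `L` makes `ℤⁿ/L` free, of rank `rank M`, and `L ⊓ M = ⊥` (forced by the ranks)
makes `v : M → ℤⁿ/L` injective; its cokernel is `ℤⁿ/(L + M)`. Saturation of `M` makes restriction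
`Hom(ℤⁿ, ℤ) → Hom(M, ℤ)` surjective with kernel `M^⊥`, and the transpose of `v` has image the
restriction of `L^⊥ = Hom(ℤⁿ/L, ℤ)`, so its cokernel is `Hom(ℤⁿ, ℤ)/(L^⊥ + M^⊥)`. Finally, an
injective map between free `ℤ`-modules of equal rank and its transpose have cokernels of the same
order `|det|`.
-/

open Module LinearMap Submodule

theorem Submodule.isTorsionFree_quotient_of_saturated {R V : Type*} [Ring R] [Nontrivial R]
    [AddCommGroup V] [Module R V] {N : Submodule R V}
    (hN : ∀ (c : R) (x : V), c ≠ 0 → c • x ∈ N → x ∈ N) : IsTorsionFree R (V ⧸ N) :=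
  .of_smul_eq_zero fun c x hx => by
    induction x using Submodule.Quotient.induction_on with | H y => ?_
    rw [← Quotient.mk_smul, Quotient.mk_eq_zero] at hx
    exact or_iff_not_imp_left.mpr fun hc => (Quotient.mk_eq_zero N).mpr (hN c y hc hx)

theorem Submodule.dualRestrict_surjective_of_projective {R V : Type*} [CommRing R]
    [AddCommGroup V] [Module R V] (W : Submodule R V) [Projective R (V ⧸ W)] :
    Function.Surjective W.dualRestrict := by
  obtain ⟨s, hs⟩ := W.mkQ.exists_rightInverse_of_surjective W.range_mkQ
  have hsplit := (exact_subtype_mkQ W).split_tfae W.injective_subtype W.mkQ_surjective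
  obtain ⟨r, hr⟩ := (hsplit.out 0 1).mp (⟨s, hs⟩ : ∃ s, W.mkQ ∘ₗ s = .id)
  exact fun φ => ⟨φ ∘ₗ r, by rw [dualRestrict_def, dualMap_apply', comp_assoc, hr, comp_id]⟩

theorem Submodule.inf_eq_bot_of_finrank_add_eq_finrank_sup {R V : Type*} [CommRing R]
    [IsDomain R] [IsNoetherianRing R] [AddCommGroup V] [Module R V] [IsTorsionFree R V]
    [Module.Finite R V] {s t : Submodule R V}
    (h : finrank R s + finrank R t = finrank R ↥(s ⊔ t)) : s ⊓ t = ⊥ := by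
  have hrank := s.rank_sup_add_rank_inf_eq t
  rw [← finrank_eq_rank, ← finrank_eq_rank, ← finrank_eq_rank, ← finrank_eq_rank] at hrank
  norm_cast at hrank
  exact Submodule.finrank_eq_zero.mp (by omega)

theorem LinearMap.injective_dualMap_of_injective {R A : Type*} [CommRing R] [IsDomain R]
    [AddCommGroup A] [Module R A] [Free R A] [Module.Finite R A] {f : A →ₗ[R] A}
    (hf : Function.Injective f) : Function.Injective f.dualMap := by
  rw [← ker_eq_bot, ← not_ne_iff, ← det_eq_zero_iff_ker_ne_bot, det_dualMap,
    det_eq_zero_iff_ker_ne_bot, not_ne_iff, ker_eq_bot]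
  exact hf

theorem LinearMap.natCard_quotient_range_eq_natAbs_det {A : Type*} [AddCommGroup A] [Free ℤ A]
    [Module.Finite ℤ A] {f : A →ₗ[ℤ] A} (hf : Function.Injective f) :
    Nat.card (A ⧸ range f) = (LinearMap.det f).natAbs := by
  rw [← (range f).natAbs_det_equiv (LinearEquiv.ofInjective f hf)]
  rfl

theorem LinearMap.natCard_quotient_range_dualMap {A B : Type*} [AddCommGroup A] [Free ℤ A]
    [Module.Finite ℤ A] [AddCommGroup B] [Free ℤ B] [Module.Finite ℤ B] {v : A →ₗ[ℤ] B}
    (hv : Function.Injective v) (hAB : finrank ℤ A = finrank ℤ B) :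
    Nat.card (Dual ℤ A ⧸ range v.dualMap) = Nat.card (B ⧸ range v) := by
  let e := LinearEquiv.ofFinrankEq B A hAB.symm
  let f := e.toLinearMap ∘ₗ v
  have hf : Function.Injective f := e.injective.comp hv
  have hdual : range f.dualMap = range v.dualMap :=
    range_comp_of_range_eq_top v.dualMap (range_eq_top.mpr e.dualMap.surjective)
  calc Nat.card (Dual ℤ A ⧸ range v.dualMap)
      = (LinearMap.det f.dualMap).natAbs := by
        rw [← hdual, natCard_quotient_range_eq_natAbs_det (injective_dualMap_of_injective hf)]
    _ = (LinearMap.det f).natAbs := by rw [det_dualMap]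
    _ = Nat.card (A ⧸ range f) := (natCard_quotient_range_eq_natAbs_det hf).symm
    _ = Nat.card (B ⧸ range v) :=
        Nat.card_congr (Quotient.equiv _ _ e (range_comp v e.toLinearMap).symm).toEquiv.symm

section QuotientEquivs

variable {R V : Type*} [CommRing R] [AddCommGroup V] [Module R V] (L M : Submodule R V)

noncomputable def Submodule.quotientSupEquivQuotientRangeDomRestrict :
    (V ⧸ L ⊔ M) ≃ₗ[R] (V ⧸ L) ⧸ range (L.mkQ.domRestrict M) :=
  (quotientQuotientEquivQuotientSup L M).symm ≪≫ₗ quotEquivOfEq _ _ (range_domRestrict _ _).symm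

noncomputable def Submodule.dualQuotientSupEquivQuotientRangeDualMap
    (hM : Function.Surjective M.dualRestrict) :
    (Dual R V ⧸ L.dualAnnihilator ⊔ M.dualAnnihilator)
      ≃ₗ[R] Dual R M ⧸ range (L.mkQ.domRestrict M).dualMap :=
  quotEquivOfEq _ _ (by
      rw [ker_comp, ker_mkQ, comap_map_eq, dualRestrict_ker_eq_dualAnnihilator]) ≪≫ₗ
    (((L.dualAnnihilator.map M.dualRestrict).mkQ ∘ₗ M.dualRestrict).quotKerEquivOfSurjective
      ((mkQ_surjective _).comp hM)) ≪≫ₗ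
    quotEquivOfEq _ _ (by
      rw [domRestrict, ← dualMap_comp_dualMap, range_comp, range_dualMap_mkQ_eq, dualRestrict_def])

end QuotientEquivs

/-- **Equality of lattice indexes.** Let `L` and `M` be saturated subgroups of `ℤ^n` such that
`rank L + rank M = n` and `L + M` has finite index in `ℤ^n`. Then
`[ℤ^n : L + M] = [Hom(ℤ^n, ℤ) : L^⊥ + M^⊥]`. -/
theorem index_sup_eq_index_dualAnnihilator_sup
    (n : ℕ) (L M : Submodule ℤ (Fin n → ℤ))
    (hLsat : ∀ (c : ℤ) (x : Fin n → ℤ), c ≠ 0 → c • x ∈ L → x ∈ L)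
    (hMsat : ∀ (c : ℤ) (x : Fin n → ℤ), c ≠ 0 → c • x ∈ M → x ∈ M)
    (hrank : Module.finrank ℤ L + Module.finrank ℤ M = n)
    (hfin : (L ⊔ M).toAddSubgroup.index ≠ 0) :
    (L ⊔ M).toAddSubgroup.index
      = (L.dualAnnihilator ⊔ M.dualAnnihilator).toAddSubgroup.index := by
  have := isTorsionFree_quotient_of_saturated hLsat
  have := isTorsionFree_quotient_of_saturated hMsat
  obtain ⟨e⟩ := Int.submodule_toAddSubgroup_index_ne_zero_iff.mp hfin
  have hinf : L ⊓ M = ⊥ := inf_eq_bot_of_finrank_add_eq_finrank_sup <| by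
    rw [hrank, e.finrank_eq, finrank_fin_fun]
  have hv : Function.Injective (L.mkQ.domRestrict M) :=
    injective_domRestrict_iff.mpr (by rw [ker_mkQ]; exact (disjoint_iff.mpr hinf).symm)
  have hrankQ : finrank ℤ M = finrank ℤ (_ ⧸ L) := by
    have := L.finrank_quotient_add_finrank
    rw [finrank_fin_fun] at this
    omega
  calc Nat.card (_ ⧸ L ⊔ M)
      = Nat.card ((_ ⧸ L) ⧸ range (L.mkQ.domRestrict M)) :=
        Nat.card_congr (quotientSupEquivQuotientRangeDomRestrict L M).toEquiv
    _ = Nat.card (Dual ℤ M ⧸ range (L.mkQ.domRestrict M).dualMap) :=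
        (natCard_quotient_range_dualMap hv hrankQ).symm
    _ = Nat.card (Dual ℤ _ ⧸ L.dualAnnihilator ⊔ M.dualAnnihilator) :=
        Nat.card_congr (dualQuotientSupEquivQuotientRangeDualMap L M
          (dualRestrict_surjective_of_projective M)).toEquiv.symm
end

section
/- Let L and M be subgroups of ℤ^n with M saturated, rank L = k, rank M = n − k, and L + M of finite index in ℤ^n. Let q₁, …, q_k be a ℤ-basis of M^⊥ ⊆ Hom(ℤ^n, ℤ) and let r₁, …, r_k be a ℤ-basis of L. Then the index [ℤ^n : L + M] equals the absolute value of the determinant of the k × k integer matrix whose (i, j) entry is q_i(r_j). -/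
/-!
The functionals `q i` assemble into a map `Φ : ℤⁿ → ℤᵏ`. Saturation makes `ℤⁿ ⧸ M` torsion-free,
hence free and reflexive, and a basis of its dual `M^⊥` then identifies it with `ℤᵏ`; so `Φ` is
surjective with kernel `M`, and `[ℤⁿ : L + M] = [ℤᵏ : Φ L]`. Finally `Φ L` is the image of the
matrix `(q i (r j))`, whose index is the absolute value of its determinant.
-/

open Module

namespace Matrix

variable {ι : Type*} [Fintype ι] [DecidableEq ι]

theorem index_range_mulVecLin_eq_zero_of_det_eq_zero {A : Matrix ι ι ℤ} (hA : A.det = 0) :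
    (LinearMap.range A.mulVecLin).toAddSubgroup.index = 0 := by
  obtain ⟨v, hv, hvA⟩ := exists_vecMul_eq_zero_iff.mpr hA
  by_contra hindex
  -- `v ⬝ᵥ ·` kills the range, which contains `index • Pi.single i 1` for every `i`.
  refine hv (funext fun i => ?_)
  obtain ⟨w, hw⟩ := AddSubgroup.nsmul_index_mem (LinearMap.range A.mulVecLin).toAddSubgroup
    (Pi.single i 1)
  have hvw : v ⬝ᵥ (A *ᵥ w) = 0 := by rw [dotProduct_mulVec, hvA, zero_dotProduct]
  rw [← mulVecLin_apply, hw, dotProduct_smul, dotProduct_single, mul_one, smul_eq_zero] at hvw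
  exact hvw.resolve_left hindex

theorem index_range_mulVecLin (A : Matrix ι ι ℤ) :
    (LinearMap.range A.mulVecLin).toAddSubgroup.index = A.det.natAbs := by
  by_cases hA : A.det = 0
  · rw [index_range_mulVecLin_eq_zero_of_det_eq_zero hA, hA, Int.natAbs_zero]
  have hinj : Function.Injective A.mulVecLin := (injective_iff_map_eq_zero _).mpr fun w hw =>
    by_contra fun hw0 => hA (exists_mulVec_eq_zero_iff.mp ⟨w, hw0, hw⟩)
  rw [AddSubgroup.index_eq_natAbs_det (Pi.basisFun ℤ ι) _
    ((Pi.basisFun ℤ ι).map (LinearEquiv.ofInjective _ hinj))]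
  have hcols : (fun j => (LinearEquiv.ofInjective _ hinj (Pi.single j 1) : ι → ℤ)) = Aᵀ :=
    funext fun j => mulVec_single_one A j
  simp only [Pi.basisFun_det, Basis.map_apply, Pi.basisFun_apply, hcols]
  exact congrArg Int.natAbs (det_transpose A)

end Matrix

theorem Module.Basis.bijective_pi_dual {R Q ι : Type*} [CommRing R] [AddCommGroup Q] [Module R Q]
    [IsReflexive R Q] (b : Basis ι R (Dual R Q)) : Function.Bijective (LinearMap.pi b) := by
  refine ⟨(injective_iff_map_eq_zero _).mpr fun x hx => ?_, fun y => ?_⟩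
  · apply (evalEquiv R Q).injective
    rw [map_zero]
    exact b.ext fun i => congr_fun hx i
  · exact ⟨(evalEquiv R Q).symm (b.constr R y), funext fun i => by simp⟩

namespace Submodule

section DualAnnihilator

variable {R E ι : Type*} [CommRing R] [AddCommGroup E] [Module R E] {M : Submodule R E}

theorem isTorsionFree_quotient [IsDomain R]
    (hM : ∀ (c : R) (x : E), c ≠ 0 → c • x ∈ M → x ∈ M) : IsTorsionFree R (E ⧸ M) := by
  refine isTorsionFree_iff_smul_eq_zero.mpr fun c x hcx => or_iff_not_imp_left.mpr fun hc => ?_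
  induction x using Quotient.induction_on with
  | H x =>
    rw [← Quotient.mk_smul, Quotient.mk_eq_zero] at hcx
    exact (Quotient.mk_eq_zero M).mpr (hM c x hc hcx)

theorem pi_basis_dualAnnihilator_eq_comp_mkQ (q : Basis ι R M.dualAnnihilator) :
    LinearMap.pi (fun i => (q i : Dual R E))
      = LinearMap.pi (q.map M.dualQuotEquivDualAnnihilator.symm) ∘ₗ M.mkQ :=
  rfl

variable [IsReflexive R (E ⧸ M)] (q : Basis ι R M.dualAnnihilator)

theorem ker_pi_basis_dualAnnihilator :
    LinearMap.ker (LinearMap.pi fun i => (q i : Dual R E)) = M := by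
  rw [pi_basis_dualAnnihilator_eq_comp_mkQ, LinearMap.ker_comp_of_ker_eq_bot _
    (LinearMap.ker_eq_bot.mpr (q.map _).bijective_pi_dual.injective), ker_mkQ]

theorem surjective_pi_basis_dualAnnihilator :
    Function.Surjective (LinearMap.pi fun i => (q i : Dual R E)) := by
  rw [pi_basis_dualAnnihilator_eq_comp_mkQ, LinearMap.coe_comp]
  exact (q.map _).bijective_pi_dual.surjective.comp M.mkQ_surjective

end DualAnnihilator

theorem index_sup_ker_eq_index_map {R E F : Type*} [Ring R] [AddCommGroup E] [Module R E]
    [AddCommGroup F] [Module R F] (L : Submodule R E) {f : E →ₗ[R] F}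
    (hf : Function.Surjective f) :
    (L ⊔ LinearMap.ker f).toAddSubgroup.index = (L.map f).toAddSubgroup.index := by
  rw [← AddSubgroup.index_map_eq _ (f := (f : E →+ F)) hf fun x hx => mem_sup_right hx,
    ← map_toAddSubgroup, map_sup, LinearMap.le_ker_iff_map.mp le_rfl, sup_bot_eq]

theorem map_eq_range_mulVecLin {R E ι κ : Type*} [CommRing R] [AddCommGroup E] [Module R E]
    [Fintype κ] {L : Submodule R E} (r : Basis κ R L) (f : E →ₗ[R] ι → R) :
    L.map f = LinearMap.range (Matrix.of fun i j => f (r j) i).mulVecLin := by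
  have hcomp : (Matrix.of fun i j => f (r j) i).mulVecLin = f ∘ₗ L.subtype ∘ₗ r.equivFun.symm := by
    ext c i
    simp [Basis.equivFun_symm_apply, Matrix.mulVec, dotProduct, mul_comm]
  rw [hcomp, LinearMap.range_comp, LinearMap.range_comp, LinearEquiv.range, map_top,
    range_subtype]

end Submodule

theorem index_sup_eq_natAbs_det_general
    (n k : ℕ) (L M : Submodule ℤ (Fin n → ℤ))
    (hMsat : ∀ (c : ℤ) (x : Fin n → ℤ), c ≠ 0 → c • x ∈ M → x ∈ M)
    (q : Module.Basis (Fin k) ℤ M.dualAnnihilator) (r : Module.Basis (Fin k) ℤ L) :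
    (L ⊔ M).toAddSubgroup.index
      = (Matrix.of fun i j : Fin k =>
          (q i : Module.Dual ℤ (Fin n → ℤ)) (r j : Fin n → ℤ)).det.natAbs := by
  have := Submodule.isTorsionFree_quotient hMsat
  have hindex := L.index_sup_ker_eq_index_map (Submodule.surjective_pi_basis_dualAnnihilator q)
  rw [Submodule.ker_pi_basis_dualAnnihilator, Submodule.map_eq_range_mulVecLin r,
    Matrix.index_range_mulVecLin] at hindex
  exact hindex

/-- **Lattice index as a determinant.** Let `L` and `M` be subgroups of `ℤ^n` with `M` saturated,
`rank L = k`, `rank M = n − k`, and `L + M` of finite index in `ℤ^n`. Let `q₁, …, q_k` be a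
`ℤ`-basis of `M^⊥ ⊆ Hom(ℤ^n, ℤ)` and `r₁, …, r_k` a `ℤ`-basis of `L`. Then
`[ℤ^n : L + M] = |det (q_i(r_j))_{i,j}|`. -/
theorem index_sup_eq_natAbs_det
    (n k : ℕ) (hk : k ≤ n) (L M : Submodule ℤ (Fin n → ℤ))
    (hMsat : ∀ (c : ℤ) (x : Fin n → ℤ), c ≠ 0 → c • x ∈ M → x ∈ M)
    (hL : Module.finrank ℤ L = k) (hM : Module.finrank ℤ M = n - k)
    (hfin : (L ⊔ M).toAddSubgroup.index ≠ 0)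
    (q : Module.Basis (Fin k) ℤ M.dualAnnihilator) (r : Module.Basis (Fin k) ℤ L) :
    (L ⊔ M).toAddSubgroup.index
      = (Matrix.of fun i j : Fin k =>
          (q i : Module.Dual ℤ (Fin n → ℤ)) (r j : Fin n → ℤ)).det.natAbs :=
  index_sup_eq_natAbs_det_general n k L M hMsat q r
end

section
/- Intersection of sub-torus cosets: Let M₁ and M₂ be subgroups of ℤ^n with M₁ ∩ M₂ = 0 and M₁ + M₂ of finite index in ℤ^n, and let y₁, y₂ ∈ (ℂˣ)^n. Then the set S = { x ∈ (ℂˣ)^n : x^a = y₁^a for all a ∈ M₁, and x^b = y₂^b for all b ∈ M₂ } is finite and its cardinality equals the index [ℤ^n : M₁ + M₂]. -/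
/-!
Write `χ_x(a) = x^a`; then `x ↦ χ_x` identifies `(ℂˣ)^n` with `Hom(ℤ^n, ℂˣ)`. Since `ℂˣ` is
divisible, it is an injective `ℤ`-module, and as `M₁ ∩ M₂ = 0` the restrictions of `χ_{y₁}` to `M₁`
and of `χ_{y₂}` to `M₂` have a common extension `φ` to `ℤ^n`. So `S` corresponds to the characters
that agree with `φ` on `M = M₁ + M₂`, a torsor under `Hom(ℤ^n / M, ℂˣ)`; and a finite abelian group
has exactly as many `ℂˣ`-valued characters as elements.
-/

universe u

section Units

variable (K : Type*) [Field K]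

theorem IsAlgClosed.pow_surjective_units [IsAlgClosed K] {n : ℕ} (hn : n ≠ 0) :
    Function.Surjective fun x : Kˣ ↦ x ^ n := fun u ↦ by
  obtain ⟨w, hw⟩ := IsAlgClosed.exists_pow_nat_eq (u : K) (Nat.pos_of_ne_zero hn)
  have hw₀ : w ≠ 0 := by
    rintro rfl
    exact u.ne_zero (by simpa [hn] using hw.symm)
  exact ⟨Units.mk0 w hw₀, Units.ext (by simpa using hw)⟩

noncomputable instance IsAlgClosed.rootableByUnits [IsAlgClosed K] : RootableBy Kˣ ℤ :=
  letI := rootableByOfPowLeftSurj Kˣ ℕ (IsAlgClosed.pow_surjective_units K)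
  Group.rootableByIntOfRootableByNat Kˣ

instance IsAlgClosed.injective_additive_units [IsAlgClosed K] :
    Module.Injective ℤ (Additive Kˣ) :=
  letI : DivisibleBy (Additive Kˣ) ℤ :=
    { div a n := .ofMul (RootableBy.root a.toMul n)
      div_zero _ := congrArg Additive.ofMul (RootableBy.root_zero _)
      div_cancel _ hn := congrArg Additive.ofMul (RootableBy.root_cancel _ hn) }
  (Module.Baer.of_divisible _).injective

theorem card_linearMap_additive_units (Q : Type*) [AddCommGroup Q] [Finite Q] [IsSepClosed K]
    [CharZero K] : Nat.card (Q →ₗ[ℤ] Additive Kˣ) = Nat.card Q := by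
  have : NeZero (Monoid.exponent (Multiplicative Q) : K) :=
    ⟨Nat.cast_ne_zero.2 Monoid.exponent_ne_zero_of_finite⟩
  calc Nat.card (Q →ₗ[ℤ] Additive Kˣ)
      = Nat.card (Multiplicative Q →* Kˣ) :=
        Nat.card_congr ((addMonoidHomLequivInt ℤ).symm.toEquiv.trans
          AddMonoidHom.toMultiplicativeLeft)
    _ = Nat.card Q := CommGroup.card_monoidHom_of_hasEnoughRootsOfUnity _ _

end Units

section Extension

variable {R N : Type*} {A : Type u} [Ring R] [AddCommGroup N] [Module R N] [AddCommGroup A]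
  [Module R A]

theorem Module.Injective.exists_eqOn_of_disjoint [Small.{u} R] [Module.Injective R A]
    {M₁ M₂ : Submodule R N} (h : Disjoint M₁ M₂) (f₁ f₂ : N →ₗ[R] A) :
    ∃ φ : N →ₗ[R] A, Set.EqOn φ f₁ M₁ ∧ Set.EqOn φ f₂ M₂ := by
  have hj : Function.Injective (M₁.mkQ ∘ₗ M₂.subtype) := by
    rw [← LinearMap.ker_eq_bot, LinearMap.ker_comp, Submodule.ker_mkQ,
      ← Submodule.disjoint_iff_comap_eq_bot]
    exact h.symm
  obtain ⟨g, hg⟩ := Module.Injective.extension_property R A _ _ _ hj ((f₂ - f₁) ∘ₗ M₂.subtype)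
  refine ⟨f₁ + g ∘ₗ M₁.mkQ, fun a ha ↦ ?_, fun b hb ↦ ?_⟩
  · simp [(Submodule.Quotient.mk_eq_zero M₁).2 ha]
  · have hgb := congr($hg ⟨b, hb⟩)
    simp only [LinearMap.comp_apply, Submodule.subtype_apply, Submodule.mkQ_apply,
      LinearMap.sub_apply] at hgb
    simp [hgb]

theorem Module.Injective.exists_forall_eqOn_sup_iff [Small.{u} R] [Module.Injective R A]
    {M₁ M₂ : Submodule R N} (h : Disjoint M₁ M₂) (f₁ f₂ : N →ₗ[R] A) :
    ∃ φ : N →ₗ[R] A, ∀ f : N →ₗ[R] A,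
      Set.EqOn f φ ↑(M₁ ⊔ M₂) ↔ Set.EqOn f f₁ M₁ ∧ Set.EqOn f f₂ M₂ := by
  obtain ⟨φ, hφ₁, hφ₂⟩ := exists_eqOn_of_disjoint h f₁ f₂
  refine ⟨φ, fun f ↦ ?_⟩
  rw [← LinearMap.le_eqLocus, sup_le_iff, LinearMap.le_eqLocus, LinearMap.le_eqLocus]
  exact and_congr ⟨(·.trans hφ₁), (·.trans hφ₁.symm)⟩ ⟨(·.trans hφ₂), (·.trans hφ₂.symm)⟩

def Submodule.eqOnEquivQuotient (M : Submodule R N) (φ : N →ₗ[R] A) :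
    {f : N →ₗ[R] A // Set.EqOn f φ M} ≃ (N ⧸ M →ₗ[R] A) where
  toFun f := M.liftQ (f - φ) fun m hm ↦ by simp [f.2 hm]
  invFun g := ⟨g ∘ₗ M.mkQ + φ, fun m hm ↦ by simp [(Submodule.Quotient.mk_eq_zero M).2 hm]⟩
  left_inv f := by ext; simp
  right_inv g := by ext; simp

end Extension

noncomputable def monomialCharEquiv (ι G : Type*) [Fintype ι] [CommGroup G] :
    (ι → G) ≃ ((ι → ℤ) →ₗ[ℤ] Additive G) :=
  (Equiv.piCongrRight fun _ ↦ Additive.ofMul).trans ((Pi.basisFun ℤ ι).constr ℤ).toEquiv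

theorem monomialCharEquiv_apply {ι G : Type*} [Fintype ι] [CommGroup G] (x : ι → G)
    (a : ι → ℤ) : monomialCharEquiv ι G x a = Additive.ofMul (∏ i, x i ^ a i) := by
  simp [monomialCharEquiv, Module.Basis.constr_apply_fintype, ofMul_prod, ofMul_zpow]

/-- **Intersection of sub-torus cosets.** Let `M₁` and `M₂` be subgroups of `ℤ^n` with
`M₁ ∩ M₂ = 0` and `M₁ + M₂` of finite index in `ℤ^n`, and let `y₁, y₂ ∈ (ℂˣ)^n`. Then the set
`S = { x : x^a = y₁^a ∀ a ∈ M₁, x^b = y₂^b ∀ b ∈ M₂ }` is finite of cardinality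
`[ℤ^n : M₁ + M₂]`. -/
theorem card_intersection_subtorus_cosets
    (n : ℕ) (M₁ M₂ : Submodule ℤ (Fin n → ℤ))
    (hdisj : M₁ ⊓ M₂ = ⊥)
    (hfin : (M₁ ⊔ M₂).toAddSubgroup.index ≠ 0)
    (y₁ y₂ : Fin n → ℂˣ)
    (S : Set (Fin n → ℂˣ))
    (hS : S = {x | (∀ a ∈ M₁, ∏ i, x i ^ a i = ∏ i, y₁ i ^ a i) ∧
                   (∀ b ∈ M₂, ∏ i, x i ^ b i = ∏ i, y₂ i ^ b i)}) :
    S.Finite ∧ S.ncard = (M₁ ⊔ M₂).toAddSubgroup.index := by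
  set χ := monomialCharEquiv (Fin n) ℂˣ
  obtain ⟨φ, hφ⟩ :=
    Module.Injective.exists_forall_eqOn_sup_iff (disjoint_iff.2 hdisj) (χ y₁) (χ y₂)
  set T : Set ((Fin n → ℤ) →ₗ[ℤ] Additive ℂˣ) := {f | Set.EqOn f φ ↑(M₁ ⊔ M₂)}
  have hST : S = χ.symm '' T := by
    rw [χ.image_symm_eq_preimage, hS]
    ext x
    simp only [Set.mem_preimage, T, Set.mem_ofPred_eq, hφ]
    simp only [Set.EqOn, SetLike.mem_coe, χ, monomialCharEquiv_apply,
      EmbeddingLike.apply_eq_iff_eq]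
  have hT : Nat.card T = (M₁ ⊔ M₂).toAddSubgroup.index :=
    have : Finite ((Fin n → ℤ) ⧸ (M₁ ⊔ M₂)) := AddSubgroup.index_ne_zero_iff_finite.1 hfin
    (Nat.card_congr ((M₁ ⊔ M₂).eqOnEquivQuotient φ)).trans (card_linearMap_additive_units ℂ _)
  rw [hST]
  exact ⟨(Set.finite_coe_iff.1 (Nat.finite_of_card_ne_zero (hT ▸ hfin))).image _,
    (Set.ncard_image_of_injective _ χ.symm.injective).trans hT⟩
end

section
/- Let A be an n × n integer matrix with det A ≠ 0 and let c ∈ (ℂˣ)^n. Then the set of solutions x ∈ (ℂˣ)^n of the system of monomial equations ∏_{j=1}^n x_j^{A_{ij}} = c_i (for i = 1, …, n) is finite and has exactly |det A| elements. Equivalently, the monomial map φ_A : (ℂˣ)^n → (ℂˣ)^n with φ_A(x)_i = ∏_j x_j^{A_{ij}} is surjective and every fiber has cardinality |det A|. -/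
/-!
By the Smith normal form, `A = P * diagonal a * Q` with `P` and `Q` unimodular. The monomial
map `φ` turns matrix products into compositions, so `φ_P` and `φ_Q` are automorphisms of `(ℂˣ)ⁿ`
and every fibre of `φ_A` is in bijection with a fibre of `φ_{diagonal a}`, which is a product of
sets `{z | z ^ a i = b}`. Since `z ↦ z ^ k` is a surjective endomorphism of `ℂˣ` with the
`|k|`-th roots of unity as kernel, these have `|a i|` elements, and `∏ |a i| = |det A|`.
-/

theorem zpow_sum {G ι : Type*} [CommGroup G] (x : G) (s : Finset ι) (f : ι → ℤ) :
    x ^ (∑ i ∈ s, f i) = ∏ i ∈ s, x ^ f i := by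
  classical
  induction s using Finset.induction_on with
  | empty => simp
  | insert a s ha ih => rw [Finset.sum_insert ha, Finset.prod_insert ha, zpow_add, ih]

section MonomialMap

variable {G : Type*} [CommGroup G] {l m n : Type*} [Fintype n]

def Matrix.monomialMap (A : Matrix m n ℤ) : (n → G) →* (m → G) where
  toFun x i := ∏ j, x j ^ A i j
  map_one' := by ext; simp
  map_mul' x y := by ext i; simp [mul_zpow, Finset.prod_mul_distrib]

theorem Matrix.monomialMap_apply (A : Matrix m n ℤ) (x : n → G) (i : m) :
    A.monomialMap x i = ∏ j, x j ^ A i j :=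
  rfl

theorem Matrix.monomialMap_mul [Fintype m] (A : Matrix l m ℤ) (B : Matrix m n ℤ) :
    (A * B).monomialMap (G := G) = A.monomialMap.comp B.monomialMap := by
  ext x i
  simp only [MonoidHom.comp_apply, monomialMap_apply, mul_apply, zpow_sum]
  rw [Finset.prod_comm]
  refine Finset.prod_congr rfl fun k _ => ?_
  rw [← Finset.prod_zpow]
  exact Finset.prod_congr rfl fun j _ => by rw [mul_comm, _root_.zpow_mul]

theorem Matrix.monomialMap_one [DecidableEq n] :
    (1 : Matrix n n ℤ).monomialMap (G := G) = MonoidHom.id _ := by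
  ext x i
  simp [monomialMap_apply, one_apply]

theorem Matrix.monomialMap_diagonal_apply [DecidableEq n] (a : n → ℤ) (x : n → G) (i : n) :
    (diagonal a).monomialMap x i = x i ^ a i := by
  simp [monomialMap_apply, diagonal_apply]

noncomputable def Matrix.monomialMulEquiv [DecidableEq n] (U : Matrix n n ℤ) (hU : IsUnit U.det) :
    (n → G) ≃* (n → G) :=
  U.monomialMap.toMulEquiv U⁻¹.monomialMap
    (by rw [← monomialMap_mul, nonsing_inv_mul U hU, monomialMap_one])
    (by rw [← monomialMap_mul, mul_nonsing_inv U hU, monomialMap_one])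

theorem Matrix.natCard_fiber_monomialMap_mul [DecidableEq n] {P Q : Matrix n n ℤ}
    (hP : IsUnit P.det) (hQ : IsUnit Q.det) (D : Matrix n n ℤ) (c : n → G) :
    Nat.card ((P * D * Q).monomialMap ⁻¹' {c}) =
      Nat.card (D.monomialMap ⁻¹' {(P.monomialMulEquiv hP).symm c}) := by
  refine Nat.card_congr ((Q.monomialMulEquiv hQ).toEquiv.subtypeEquiv fun x => ?_)
  simp only [Set.mem_preimage, Set.mem_singleton_iff, monomialMap_mul, MonoidHom.comp_apply]
  exact (P.monomialMulEquiv hP).eq_symm_apply.symm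

end MonomialMap

theorem Matrix.exists_eq_mul_diagonal_mul_of_det_ne_zero {R ι : Type*} [CommRing R]
    [IsDomain R] [IsPrincipalIdealRing R] [Fintype ι] [DecidableEq ι] (A : Matrix ι ι R)
    (hA : A.det ≠ 0) :
    ∃ (P Q : Matrix ι ι R) (a : ι → R), IsUnit P.det ∧ IsUnit Q.det ∧ A = P * diagonal a * Q := by
  let N := LinearMap.range A.mulVecLin
  let g : (ι → R) ≃ₗ[R] N :=
    LinearEquiv.ofInjective A.mulVecLin (mulVec_injective_of_det_ne_zero hA)
  let std := Pi.basisFun R ι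
  obtain ⟨b, a, bN, hbN⟩ := Submodule.exists_smith_normal_form_of_rank_eq std g.finrank_eq.symm
  refine ⟨LinearMap.toMatrix b std LinearMap.id, LinearMap.toMatrix std bN g, a,
    LinearEquiv.isUnit_det (LinearEquiv.refl R _) b std, LinearEquiv.isUnit_det g std bN, ?_⟩
  have hfactor : (LinearMap.id ∘ₗ N.subtype) ∘ₗ g.toLinearMap = toLin' A :=
    LinearMap.ext fun _ => rfl
  have hdiag : LinearMap.toMatrix bN b N.subtype = diagonal a := by
    ext i j
    rw [LinearMap.toMatrix_apply, Submodule.subtype_apply, hbN, map_smul, Module.Basis.repr_self,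
      diagonal_apply]
    by_cases h : i = j <;> simp [h]
  calc A = LinearMap.toMatrix std std ((LinearMap.id ∘ₗ N.subtype) ∘ₗ g) := by
        rw [hfactor, LinearMap.toMatrix_eq_toMatrix', LinearMap.toMatrix'_toLin']
    _ = LinearMap.toMatrix b std LinearMap.id * diagonal a * LinearMap.toMatrix std bN g := by
        rw [LinearMap.toMatrix_comp std bN std, LinearMap.toMatrix_comp bN b std, hdiag]

theorem Complex.natCard_zpow_fiber {k : ℤ} (hk : k ≠ 0) (b : ℂˣ) :
    Nat.card {z : ℂˣ // z ^ k = b} = k.natAbs := by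
  have hsurj : Function.Surjective (zpowGroupHom k : ℂˣ →* ℂˣ) := fun b =>
    ⟨Units.mk0 (exp (log b / k)) (exp_ne_zero _), Units.ext <| by
      rw [zpowGroupHom_apply, Units.val_zpow_eq_zpow_val, Units.val_mk0, ← exp_int_mul,
        mul_div_cancel₀ _ (Int.cast_ne_zero.2 hk), exp_log b.ne_zero]⟩
  have : NeZero k.natAbs := ⟨Int.natAbs_ne_zero.2 hk⟩
  rw [← card_rootsOfUnity k.natAbs, ← ker_zpowGroupHom_eq_rootsOfUnity]
  exact Nat.card_congr (MonoidHom.fiberEquivKerOfSurjective hsurj b)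

theorem Matrix.natCard_fiber_monomialMap_diagonal {n : Type*} [Fintype n] [DecidableEq n]
    {a : n → ℤ} (ha : ∀ i, a i ≠ 0) (c : n → ℂˣ) :
    Nat.card ((diagonal a).monomialMap ⁻¹' {c}) = ∏ i, (a i).natAbs := by
  have hfiber (x : n → ℂˣ) : x ∈ (diagonal a).monomialMap ⁻¹' {c} ↔ ∀ i, x i ^ a i = c i := by
    simp [funext_iff, monomialMap_diagonal_apply]
  rw [Nat.card_congr ((Equiv.subtypeEquivRight hfiber).trans
    (Equiv.subtypePiEquivPi (p := fun i z => z ^ a i = c i))), Nat.card_pi]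
  exact Finset.prod_congr rfl fun i _ => Complex.natCard_zpow_fiber (ha i) (c i)

theorem Matrix.natCard_fiber_monomialMap {n : Type*} [Fintype n] [DecidableEq n]
    (A : Matrix n n ℤ) (hA : A.det ≠ 0) (c : n → ℂˣ) :
    Nat.card (A.monomialMap ⁻¹' {c}) = A.det.natAbs := by
  obtain ⟨P, Q, a, hP, hQ, rfl⟩ := A.exists_eq_mul_diagonal_mul_of_det_ne_zero hA
  have hdet : (P * diagonal a * Q).det.natAbs = ∏ i, (a i).natAbs := by
    rw [det_mul, det_mul, det_diagonal, Int.natAbs_mul, Int.natAbs_mul,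
      Int.isUnit_iff_natAbs_eq.1 hP, Int.isUnit_iff_natAbs_eq.1 hQ, one_mul, mul_one]
    exact map_prod Int.natAbsHom a Finset.univ
  have ha : ∀ i, a i ≠ 0 := fun i hi => hA <| Int.natAbs_eq_zero.1 <| by
    rw [hdet, Finset.prod_eq_zero (Finset.mem_univ i) (by simp [hi])]
  rw [natCard_fiber_monomialMap_mul hP hQ, natCard_fiber_monomialMap_diagonal ha, hdet]

/-- **Solutions of a nondegenerate monomial system.** Let `A` be an `n × n` integer matrix with
`det A ≠ 0` and `c ∈ (ℂˣ)^n`. Then the set of solutions `x ∈ (ℂˣ)^n` of the system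
`∏_j x_j ^ A i j = c i` (for `i = 1, …, n`) is finite with exactly `|det A|` elements. -/
theorem card_solutions_monomial_system
    (n : ℕ) (A : Matrix (Fin n) (Fin n) ℤ) (hA : A.det ≠ 0) (c : Fin n → ℂˣ)
    (S : Set (Fin n → ℂˣ)) (hS : S = {x | ∀ i, ∏ j, x j ^ A i j = c i}) :
    S.Finite ∧ S.ncard = A.det.natAbs := by
  have hS' : S = A.monomialMap ⁻¹' {c} := by
    rw [hS]
    ext x
    simp [funext_iff, Matrix.monomialMap_apply]
  have hcard : S.ncard = A.det.natAbs := by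
    rw [hS', ← Nat.card_coe_set_eq, A.natCard_fiber_monomialMap hA]
  exact ⟨Set.finite_of_ncard_ne_zero (hcard ▸ Int.natAbs_ne_zero.2 hA), hcard⟩
end

section
/- Tropicalization of a hypersurface with constant coefficients: Let K be an algebraically closed field equipped with a surjective group homomorphism v : Kˣ → (ℚ, +) satisfying v(x + y) ≥ min(v(x), v(y)) whenever x, y, x + y ∈ Kˣ. Let A ⊆ ℤ^n be a finite set with at least two elements, and for each ω ∈ A let a_ω ∈ Kˣ with v(a_ω) = 0. Let f be the Laurent polynomial f(x) = Σ_{ω ∈ A} a_ω x^ω. Then { v(x) : x ∈ (Kˣ)^n, f(x) = 0 } = { w ∈ ℚ^n : the minimum of ⟨ω, w⟩ over ω ∈ A is attained by at least two distinct elements ω ∈ A }, where ⟨ω, w⟩ = Σ_i ω_i w_i. -/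
/-!
If `f(x) = 0`, the terms `a_ω x^ω` have valuations `⟨ω, v(x)⟩` and sum to zero, so by the
ultrametric inequality their minimal valuation is attained twice.

Conversely, let the minimum of `⟨ω, w⟩` be attained at `ω₁ ≠ ω₂`. Pick `t` with `v(t) = w` and
an integer vector `d` such that `ω ↦ ⟨ω, d⟩` is injective on `A`. Along the curve `x = t · T^d`,
`f` becomes, up to a power of `T`, a polynomial in `T` whose coefficients attain their minimal
valuation at two different exponents. Over an algebraically closed field, a polynomial all of
whose roots have nonzero valuation is a product of linear factors each having a unique
coefficient of minimal valuation, and this property is stable under products. Hence our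
polynomial has a root `T` of valuation `0`, and `x = t · T^d` is a zero of `f` with `v(x) = w`.
-/

open Finset Polynomial

section MapMul

variable {G M : Type*} [AddCommGroup M] {v : G → M}

def monoidHomOfMapMul [Group G] (hv : ∀ x y, v (x * y) = v x + v y) : G →* Multiplicative M :=
  MonoidHom.mk' (fun g => Multiplicative.ofAdd (v g)) hv

theorem map_one_of_map_mul [Group G] (hv : ∀ x y, v (x * y) = v x + v y) : v 1 = 0 :=
  congrArg Multiplicative.toAdd (map_one (monoidHomOfMapMul hv))

theorem map_zpow_of_map_mul [Group G] (hv : ∀ x y, v (x * y) = v x + v y) (x : G) (m : ℤ) :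
    v (x ^ m) = m • v x :=
  congrArg Multiplicative.toAdd (map_zpow (monoidHomOfMapMul hv) x m)

theorem map_prod_of_map_mul {ι : Type*} [CommGroup G] (hv : ∀ x y, v (x * y) = v x + v y)
    (s : Finset ι) (f : ι → G) : v (∏ i ∈ s, f i) = ∑ i ∈ s, v (f i) :=
  congrArg Multiplicative.toAdd (map_prod (monoidHomOfMapMul hv) f s)

end MapMul

theorem prod_zpow_eq_zpow_sum {G ι : Type*} [CommGroup G] (s : Finset ι) (g : G) (f : ι → ℤ) :
    ∏ i ∈ s, g ^ f i = g ^ ∑ i ∈ s, f i := by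
  classical
  induction s using Finset.induction_on with
  | empty => simp
  | insert i s hi ih => rw [prod_insert hi, sum_insert hi, ih, zpow_add]

section OfUnits

variable {K Γ : Type*} [Field K] [AddCommGroup Γ] [LinearOrder Γ] [IsOrderedAddMonoid Γ]

open scoped Classical in
noncomputable def AddValuation.ofUnits (v : Kˣ → Γ)
    (hv_mul : ∀ x y : Kˣ, v (x * y) = v x + v y)
    (hv_ultra : ∀ x y z : Kˣ, (x : K) + (y : K) = (z : K) → min (v x) (v y) ≤ v z) :
    AddValuation K (WithTop Γ) :=
  AddValuation.of (fun x => if hx : x = 0 then ⊤ else v (Units.mk0 x hx))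
    (dif_pos rfl)
    (by
      rw [dif_neg one_ne_zero, Units.mk0_one, map_one_of_map_mul hv_mul, WithTop.coe_zero])
    (fun x y => by
      by_cases hx : x = 0; · simp [hx]
      by_cases hy : y = 0; · simp [hy]
      by_cases hxy : x + y = 0; · simp [hxy]
      simp only [dif_neg hx, dif_neg hy, dif_neg hxy, ← WithTop.coe_min, WithTop.coe_le_coe]
      exact hv_ultra _ _ _ rfl)
    (fun x y => by
      by_cases hx : x = 0; · simp [hx]
      by_cases hy : y = 0; · simp [hy]
      have : Units.mk0 (x * y) (mul_ne_zero hx hy) = .mk0 x hx * .mk0 y hy := Units.ext rfl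
      simp only [dif_neg hx, dif_neg hy, dif_neg (mul_ne_zero hx hy), this, hv_mul,
        WithTop.coe_add])

theorem AddValuation.ofUnits_apply_coe (v : Kˣ → Γ)
    (hv_mul : ∀ x y : Kˣ, v (x * y) = v x + v y)
    (hv_ultra : ∀ x y z : Kˣ, (x : K) + (y : K) = (z : K) → min (v x) (v y) ≤ v z) (u : Kˣ) :
    AddValuation.ofUnits v hv_mul hv_ultra u = v u := by
  rw [AddValuation.ofUnits, AddValuation.of_apply, dif_neg u.ne_zero, Units.mk0_val]

end OfUnits

namespace AddValuation

section Ring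

variable {R Γ₀ : Type*} [CommRing R] [LinearOrderedAddCommGroupWithTop Γ₀]
  (ν : AddValuation R Γ₀)

theorem map_sum_eq_of_lt {ι : Type*} [DecidableEq ι] {s : Finset ι} {f : ι → R} {j : ι}
    (hj : j ∈ s) (hf : ∀ i ∈ s, i ≠ j → ν (f j) < ν (f i)) :
    ν (∑ i ∈ s, f i) = ν (f j) := by
  have hf' : ∀ i ∈ s.erase j, ν (f j) < ν (f i) := fun i hi =>
    hf i (mem_of_mem_erase hi) (ne_of_mem_erase hi)
  rw [← add_sum_erase s f hj]
  rcases eq_or_ne (ν (f j)) ⊤ with htop | htop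
  · have : s.erase j = ∅ := eq_empty_of_forall_notMem fun i hi => not_top_lt (htop ▸ hf' i hi)
    simp [this]
  · exact ν.map_add_eq_of_lt_left (ν.map_lt_sum htop hf')

def HasUniqueMinCoeff (p : R[X]) : Prop :=
  ∃ k, ∀ l ≠ k, ν (p.coeff k) < ν (p.coeff l)

variable {ν}

theorem hasUniqueMinCoeff_C {c : R} (hc : ν c ≠ ⊤) : ν.HasUniqueMinCoeff (C c) :=
  ⟨0, fun l hl => by simpa [coeff_C, hl] using hc.lt_top⟩

theorem hasUniqueMinCoeff_X_sub_C {r : R} (hr : ν r ≠ 0) : ν.HasUniqueMinCoeff (X - C r) := by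
  rcases hr.lt_or_gt with hneg | hpos
  · refine ⟨0, fun l hl => ?_⟩
    rcases l with _ | _ | l
    · exact absurd rfl hl
    · simp [hneg]
    · simpa [coeff_X, coeff_C] using hneg.trans_le le_top
  · refine ⟨1, fun l hl => ?_⟩
    rcases l with _ | _ | l
    · simpa using hpos
    · exact absurd rfl hl
    · simp [coeff_X]

theorem HasUniqueMinCoeff.mul {p q : R[X]} (hp : ν.HasUniqueMinCoeff p)
    (hq : ν.HasUniqueMinCoeff q) : ν.HasUniqueMinCoeff (p * q) := by
  classical
  obtain ⟨k, hk⟩ := hp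
  obtain ⟨l, hl⟩ := hq
  have hk_top := (hk (k + 1) k.succ_ne_self).ne_top
  have hl_top := (hl (l + 1) l.succ_ne_self).ne_top
  have hlt : ∀ x : ℕ × ℕ, x ≠ (k, l) →
      ν (p.coeff k * q.coeff l) < ν (p.coeff x.1 * q.coeff x.2) := by
    rintro ⟨i, j⟩ hij
    have hqj : ν (q.coeff l) ≤ ν (q.coeff j) :=
      (eq_or_ne j l).elim (· ▸ le_rfl) (hl j · |>.le)
    rw [map_mul, map_mul]
    rcases ne_or_eq i k with hi | rfl
    · calc ν (p.coeff k) + ν (q.coeff l) < ν (p.coeff i) + ν (q.coeff l) :=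
            (add_lt_add_iff_left_of_ne_top hl_top).2 (hk i hi)
        _ ≤ ν (p.coeff i) + ν (q.coeff j) := add_le_add le_rfl hqj
    · have hj : j ≠ l := fun h => hij (by rw [h])
      exact (add_lt_add_iff_right_of_ne_top hk_top).2 (hl j hj)
  refine ⟨k + l, fun m hm => ?_⟩
  rw [coeff_mul, coeff_mul, ν.map_sum_eq_of_lt (mem_antidiagonal.2 rfl) fun x _ hx => hlt x hx]
  refine ν.map_lt_sum ?_ fun x hx => hlt x ?_
  · rw [map_mul]; exact LinearOrderedAddCommGroupWithTop.add_ne_top.2 ⟨hk_top, hl_top⟩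
  · rintro rfl; exact hm (mem_antidiagonal.1 hx).symm

theorem not_hasUniqueMinCoeff {p : R[X]} {i j : ℕ} (hij : i ≠ j)
    (heq : ν (p.coeff i) = ν (p.coeff j)) (hmin : ∀ k, ν (p.coeff i) ≤ ν (p.coeff k)) :
    ¬ ν.HasUniqueMinCoeff p := by
  rintro ⟨k, hk⟩
  obtain ⟨l, hlk, hl⟩ : ∃ l ≠ k, ν (p.coeff l) = ν (p.coeff i) :=
    (eq_or_ne i k).elim (fun hik => ⟨j, hik ▸ hij.symm, heq.symm⟩) fun hik => ⟨i, hik, rfl⟩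
  exact (hk l hlk).not_ge (hl ▸ hmin k)

theorem exists_ne_map_eq_min_of_sum_eq_zero {ι : Type*} {s : Finset ι} {c : ι → R}
    (hs : s.Nonempty) (hc : ∀ k ∈ s, ν (c k) ≠ ⊤) (h : ∑ k ∈ s, c k = 0) :
    ∃ i ∈ s, ∃ j ∈ s, i ≠ j ∧ ν (c i) = ν (c j) ∧ ∀ k ∈ s, ν (c i) ≤ ν (c k) := by
  classical
  obtain ⟨i, hi, hmin⟩ := exists_min_image s (fun k => ν (c k)) hs
  obtain ⟨j, hj, hji, hle⟩ : ∃ j ∈ s, j ≠ i ∧ ν (c j) ≤ ν (c i) := by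
    by_contra! hlt
    have := ν.map_sum_eq_of_lt hi hlt
    rw [h, map_zero] at this
    exact hc i hi this.symm
  exact ⟨i, hi, j, hj, hji.symm, le_antisymm (hmin j hj) hle, hmin⟩

end Ring

theorem exists_isRoot_map_eq_zero {K Γ₀ : Type*} [Field K] [IsAlgClosed K]
    [LinearOrderedAddCommGroupWithTop Γ₀] {ν : AddValuation K Γ₀} {p : K[X]} (hp : p ≠ 0)
    (h : ¬ ν.HasUniqueMinCoeff p) : ∃ r, p.IsRoot r ∧ ν r = 0 := by
  contrapose! h
  rw [(IsAlgClosed.splits p).eq_prod_roots]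
  refine (hasUniqueMinCoeff_C (ν.ne_top_iff.2 (leadingCoeff_ne_zero.2 hp))).mul ?_
  refine Multiset.prod_induction _ _ (fun _ _ => HasUniqueMinCoeff.mul)
    (by simpa using hasUniqueMinCoeff_C (ν := ν) (c := 1) (by simp)) ?_
  simp only [Multiset.mem_map]
  rintro _ ⟨r, hr, rfl⟩
  exact hasUniqueMinCoeff_X_sub_C (h r (isRoot_of_mem_roots hr))

theorem exists_unit_map_eq_zero_sum_mul_zpow_eq_zero {K Γ₀ ι : Type*} [Field K]
    [IsAlgClosed K] [LinearOrderedAddCommGroupWithTop Γ₀] {ν : AddValuation K Γ₀}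
    {s : Finset ι} {e : ι → ℤ} (he : Set.InjOn e s) {c : ι → K} {i j : ι} (hi : i ∈ s)
    (hj : j ∈ s) (hij : i ≠ j) (hci : c i ≠ 0) (heq : ν (c i) = ν (c j))
    (hmin : ∀ k ∈ s, ν (c i) ≤ ν (c k)) :
    ∃ T : Kˣ, ν T = 0 ∧ ∑ k ∈ s, c k * (T : K) ^ e k = 0 := by
  classical
  set m := s.inf' ⟨i, hi⟩ e
  set E : ι → ℕ := fun k => (e k - m).toNat
  have hE : ∀ k ∈ s, e k = m + E k := fun k hk => by
    have := inf'_le e hk; simp only [E]; omega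
  have hEinj : Set.InjOn E s := fun k hk l hl h => he hk hl <| by rw [hE k hk, hE l hl, h]
  set p : K[X] := ∑ k ∈ s, C (c k) * X ^ E k
  have hcoeff : ∀ k ∈ s, p.coeff (E k) = c k := fun k hk => by
    rw [finsetSum_coeff, sum_eq_single k (fun l hl hlk => ?_) (absurd hk), coeff_C_mul_X_pow,
      if_pos rfl]
    rw [coeff_C_mul_X_pow, if_neg fun h => hlk (hEinj hl hk h.symm)]
  have hle : ∀ N, ν (c i) ≤ ν (p.coeff N) := fun N => by
    rw [finsetSum_coeff]
    refine ν.map_le_sum fun k hk => ?_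
    rw [coeff_C_mul_X_pow]
    split_ifs
    exacts [hmin k hk, by simp]
  have hp : p ≠ 0 := fun h => hci (by rw [← hcoeff i hi, h, coeff_zero])
  obtain ⟨r, hr, hνr⟩ := exists_isRoot_map_eq_zero hp <|
    not_hasUniqueMinCoeff (fun h => hij (hEinj hi hj h))
      (by rw [hcoeff i hi, hcoeff j hj, heq]) (by rw [hcoeff i hi]; exact hle)
  have hr0 : r ≠ 0 := by rintro rfl; simp at hνr
  refine ⟨Units.mk0 r hr0, hνr, ?_⟩
  calc ∑ k ∈ s, c k * r ^ e k = r ^ m * p.eval r := by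
        simp only [p, eval_finsetSum, mul_sum, eval_mul, eval_C, eval_pow, eval_X]
        refine sum_congr rfl fun k hk => ?_
        rw [hE k hk, zpow_add₀ hr0, zpow_natCast]
        ring
    _ = 0 := by rw [hr.eq_zero, mul_zero]

end AddValuation

theorem exists_injOn_sum_mul_pow {n : ℕ} (A : Finset (Fin n → ℤ)) :
    ∃ s : ℤ, Set.InjOn (fun ω : Fin n → ℤ => ∑ i, ω i * s ^ (i : ℕ)) A := by
  classical
  set P : (Fin n → ℤ) → ℤ[X] := fun δ => ∑ i, C (δ i) * X ^ (i : ℕ)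
  have hP : ∀ δ, δ ≠ 0 → P δ ≠ 0 := fun δ hδ h => by
    obtain ⟨i, hi⟩ := Function.ne_iff.1 hδ
    have := congrArg (coeff · i) h
    simp [P, finsetSum_coeff, Fin.val_inj] at this
    exact hi this
  have hQ : ∏ x ∈ A.offDiag, P (x.1 - x.2) ≠ 0 :=
    prod_ne_zero_iff.2 fun x hx => hP _ (sub_ne_zero.2 (mem_offDiag.1 hx).2.2)
  obtain ⟨s, hs⟩ : ∃ s, (∏ x ∈ A.offDiag, P (x.1 - x.2)).eval s ≠ 0 := by
    by_contra! h
    exact hQ (zero_of_eval_zero _ h)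
  refine ⟨s, fun ω hω ω' hω' h => by_contra fun hne => ?_⟩
  rw [eval_prod, prod_ne_zero_iff] at hs
  apply hs (ω, ω') (mem_offDiag.2 ⟨hω, hω', hne⟩)
  simpa [P, eval_finsetSum, sub_mul, sub_eq_zero] using h

section Tropical

variable {K : Type*} [Field K]

theorem AddValuation.ofUnits_apply_monomial (v : Kˣ → ℚ)
    (hv_mul : ∀ x y : Kˣ, v (x * y) = v x + v y)
    (hv_ultra : ∀ x y z : Kˣ, (x : K) + (y : K) = (z : K) → min (v x) (v y) ≤ v z)
    {n : ℕ} (c : Kˣ) (x : Fin n → Kˣ) (ω : Fin n → ℤ) :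
    ofUnits v hv_mul hv_ultra ((c : K) * ∏ i, (x i : K) ^ ω i)
      = ((v c + ∑ i, (ω i : ℚ) * v (x i) : ℚ) : WithTop ℚ) := by
  have : (c : K) * ∏ i, (x i : K) ^ ω i = ((c * ∏ i, x i ^ ω i : Kˣ) : K) := by
    push_cast; rfl
  rw [this, ofUnits_apply_coe, hv_mul, map_prod_of_map_mul hv_mul]
  simp only [map_zpow_of_map_mul hv_mul, zsmul_eq_mul]

theorem min_attained_twice_of_sum_eq_zero (v : Kˣ → ℚ)
    (hv_mul : ∀ x y : Kˣ, v (x * y) = v x + v y)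
    (hv_ultra : ∀ x y z : Kˣ, (x : K) + (y : K) = (z : K) → min (v x) (v y) ≤ v z)
    {n : ℕ} {A : Finset (Fin n → ℤ)} (hA : A.Nonempty) {a : (Fin n → ℤ) → Kˣ}
    (ha : ∀ ω ∈ A, v (a ω) = 0) {w : Fin n → ℚ} {x : Fin n → Kˣ} (hx : ∀ i, v (x i) = w i)
    (hf : ∑ ω ∈ A, (a ω : K) * ∏ i, (x i : K) ^ ω i = 0) :
    ∃ ω₁ ∈ A, ∃ ω₂ ∈ A, ω₁ ≠ ω₂ ∧
      (∑ i, (ω₁ i : ℚ) * w i) = (∑ i, (ω₂ i : ℚ) * w i) ∧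
      ∀ ω ∈ A, (∑ i, (ω₁ i : ℚ) * w i) ≤ ∑ i, (ω i : ℚ) * w i := by
  set ν := AddValuation.ofUnits v hv_mul hv_ultra
  have hν : ∀ ω ∈ A,
      ν ((a ω : K) * ∏ i, (x i : K) ^ ω i) = ((∑ i, (ω i : ℚ) * w i : ℚ) : WithTop ℚ) :=
    fun ω hω => by simp only [ν, AddValuation.ofUnits_apply_monomial, ha ω hω, hx, zero_add]
  obtain ⟨ω₁, h₁, ω₂, h₂, hne, heq, hmin⟩ :=
    ν.exists_ne_map_eq_min_of_sum_eq_zero hA (fun ω hω => hν ω hω ▸ WithTop.coe_ne_top) hf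
  rw [hν _ h₁, hν _ h₂, WithTop.coe_inj] at heq
  refine ⟨ω₁, h₁, ω₂, h₂, hne, heq, fun ω hω => ?_⟩
  simpa only [hν _ h₁, hν _ hω, WithTop.coe_le_coe] using hmin ω hω

theorem exists_sum_eq_zero_of_min_attained_twice [IsAlgClosed K] (v : Kˣ → ℚ)
    (hv_mul : ∀ x y : Kˣ, v (x * y) = v x + v y) (hv_surj : Function.Surjective v)
    (hv_ultra : ∀ x y z : Kˣ, (x : K) + (y : K) = (z : K) → min (v x) (v y) ≤ v z)
    {n : ℕ} {A : Finset (Fin n → ℤ)} {a : (Fin n → ℤ) → Kˣ} (ha : ∀ ω ∈ A, v (a ω) = 0)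
    {w : Fin n → ℚ} {ω₁ ω₂ : Fin n → ℤ} (h₁ : ω₁ ∈ A) (h₂ : ω₂ ∈ A) (hne : ω₁ ≠ ω₂)
    (heq : (∑ i, (ω₁ i : ℚ) * w i) = (∑ i, (ω₂ i : ℚ) * w i))
    (hmin : ∀ ω ∈ A, (∑ i, (ω₁ i : ℚ) * w i) ≤ ∑ i, (ω i : ℚ) * w i) :
    ∃ x : Fin n → Kˣ, (∀ i, v (x i) = w i) ∧
      ∑ ω ∈ A, (a ω : K) * ∏ i, (x i : K) ^ ω i = 0 := by
  set ν := AddValuation.ofUnits v hv_mul hv_ultra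
  choose t ht using fun i => hv_surj (w i)
  obtain ⟨s, hs⟩ := exists_injOn_sum_mul_pow A
  set d : Fin n → ℤ := fun i => s ^ (i : ℕ)
  have hν : ∀ ω ∈ A,
      ν ((a ω : K) * ∏ i, (t i : K) ^ ω i) = ((∑ i, (ω i : ℚ) * w i : ℚ) : WithTop ℚ) :=
    fun ω hω => by simp only [ν, AddValuation.ofUnits_apply_monomial, ha ω hω, ht, zero_add]
  obtain ⟨T, hT, hsum⟩ := AddValuation.exists_unit_map_eq_zero_sum_mul_zpow_eq_zero hs h₁ h₂ hne
    (c := fun ω => (a ω : K) * ∏ i, (t i : K) ^ ω i) (by simp [prod_eq_zero_iff, zpow_ne_zero])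
    (by rw [hν _ h₁, hν _ h₂, heq])
    (fun ω hω => by rw [hν _ h₁, hν _ hω, WithTop.coe_le_coe]; exact hmin ω hω)
  have hvT : v T = 0 := by
    rw [AddValuation.ofUnits_apply_coe] at hT; exact_mod_cast hT
  refine ⟨fun i => t i * T ^ d i,
    fun i => by simp [hv_mul, map_zpow_of_map_mul hv_mul, hvT, ht], ?_⟩
  rw [← hsum]
  refine sum_congr rfl fun ω _ => ?_
  have hterm : a ω * ∏ i, (t i * T ^ d i) ^ ω i
      = (a ω * ∏ i, t i ^ ω i) * T ^ ∑ i, ω i * d i := by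
    simp only [mul_zpow, ← zpow_mul, prod_mul_distrib, prod_zpow_eq_zpow_sum, mul_assoc,
      mul_comm (d _)]
  simpa using congrArg Units.val hterm

end Tropical

/-- **Tropicalization of a hypersurface with constant coefficients.** Let `K` be an algebraically
closed field with a surjective valuation `v : Kˣ → ℚ` satisfying the ultrametric inequality. Let
`A ⊆ ℤ^n` be finite with at least two elements and let `a_ω ∈ Kˣ` with `v(a_ω) = 0` for `ω ∈ A`.
For `f(x) = Σ_{ω ∈ A} a_ω x^ω`, the set `{ v(x) : f(x) = 0 }` equals the set of `w ∈ ℚ^n` where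
the minimum of `⟨ω, w⟩` over `ω ∈ A` is attained at least twice. -/
theorem tropicalization_hypersurface_constant_coefficients
    (K : Type*) [Field K] [IsAlgClosed K]
    (v : Kˣ → ℚ)
    (hv_mul : ∀ x y : Kˣ, v (x * y) = v x + v y)
    (hv_surj : Function.Surjective v)
    (hv_ultra : ∀ x y z : Kˣ, (x : K) + (y : K) = (z : K) → min (v x) (v y) ≤ v z)
    (n : ℕ) (A : Finset (Fin n → ℤ)) (hA : 2 ≤ A.card)
    (a : (Fin n → ℤ) → Kˣ) (ha : ∀ ω ∈ A, v (a ω) = 0) :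
    {w : Fin n → ℚ | ∃ x : Fin n → Kˣ, (∀ i, v (x i) = w i) ∧
        ∑ ω ∈ A, (a ω : K) * ∏ i, (x i : K) ^ ω i = 0}
      = {w : Fin n → ℚ | ∃ ω₁ ∈ A, ∃ ω₂ ∈ A, ω₁ ≠ ω₂ ∧
          (∑ i, (ω₁ i : ℚ) * w i) = (∑ i, (ω₂ i : ℚ) * w i) ∧
          ∀ ω ∈ A, (∑ i, (ω₁ i : ℚ) * w i) ≤ ∑ i, (ω i : ℚ) * w i} := by
  ext w
  constructor
  · rintro ⟨x, hx, hf⟩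
    exact min_attained_twice_of_sum_eq_zero v hv_mul hv_ultra (card_pos.1 (by omega)) ha hx hf
  · rintro ⟨ω₁, h₁, ω₂, h₂, hne, heq, hmin⟩
    exact exists_sum_eq_zero_of_min_attained_twice v hv_mul hv_surj hv_ultra ha h₁ h₂ hne heq hmin
end
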